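/- arXiv:2205.02615 — 2 statements merged into one kernel-verified Lean document; each statement's English description precedes it below -/
import Mathlib

section
/- On the phase space R^4 with coordinates (u, v, p_u, p_v), with g_s(t) = t^{s+1/2} for s ∈ {-1/2, 1/2}, define S^+_s = (1/2)( g_s'(t)(u+v) + g_s(t)(p_u + p_v) + g_s'(t)(v-u) + g_s(t)(p_u - p_v) ) and S^-_s = (1/2)( g_s'(t)(u+v) + g_s(t)(p_u + p_v) - g_s'(t)(v-u) - g_s(t)(p_u - p_v) ). Then the canonical Poisson brackets at fixed time t satisfy {S^ε_s, S^{ε'}_{s'}} = 2 s δ_{ε+ε', 0} δ_{s+s', 0} for ε, ε' ∈ {+,-} and s, s' ∈ {-1/2, 1/2}, forming a two-dimensional Heisenberg algebra h_2 with central extension. -/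
/-- Partial derivative of a phase-space function on ℝ⁴ in the `i`-th coordinate. -/
noncomputable def pd (i : Fin 4) (F : (Fin 4 → ℝ) → ℝ) (x : Fin 4 → ℝ) : ℝ :=
  fderiv ℝ F x (Pi.single i 1)

/-- Canonical Poisson bracket on ℝ⁴ with coordinates (u, v, p_u, p_v) = (x 0, x 1, x 2, x 3),
time t treated as a parameter. -/
noncomputable def pb (F G : (Fin 4 → ℝ) → ℝ) (x : Fin 4 → ℝ) : ℝ :=
  pd 0 F x * pd 2 G x + pd 1 F x * pd 3 G x - pd 2 F x * pd 0 G x - pd 3 F x * pd 1 G x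

/-- g_s(t) = t^(s+1/2) for s ∈ {-1/2, 1/2}: g_{1/2}(t) = t, g_{-1/2}(t) = 1. -/
noncomputable def gfun (s t : ℝ) : ℝ := if s = 1 / 2 then t else 1

/-- g_s'(t): g_{1/2}'(t) = 1, g_{-1/2}'(t) = 0. -/
noncomputable def gfun' (s : ℝ) : ℝ := if s = 1 / 2 then 1 else 0

/-- The Heisenberg charges S^ε_s (ε = +1 or -1 encodes the sign ±):
S^+_s = (1/2)( g'(u+v) + g(p_u+p_v) + g'(v-u) + g(p_u-p_v) ),
S^-_s = (1/2)( g'(u+v) + g(p_u+p_v) - g'(v-u) - g(p_u-p_v) ). -/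
noncomputable def Sgen (ε : ℤ) (s t : ℝ) : (Fin 4 → ℝ) → ℝ := fun x =>
  if ε = 1 then
    (1 / 2) * (gfun' s * (x 0 + x 1) + gfun s t * (x 2 + x 3)
      + gfun' s * (x 1 - x 0) + gfun s t * (x 2 - x 3))
  else
    (1 / 2) * (gfun' s * (x 0 + x 1) + gfun s t * (x 2 + x 3)
      - gfun' s * (x 1 - x 0) - gfun s t * (x 2 - x 3))


noncomputable def pr (i : Fin 4) : (Fin 4 → ℝ) →L[ℝ] ℝ := ContinuousLinearMap.proj i

lemma pd_linear (c : Fin 4 → ℝ) (x : Fin 4 → ℝ) (i : Fin 4) :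
    pd i (fun x => c 0 * x 0 + c 1 * x 1 + c 2 * x 2 + c 3 * x 3) x = c i := by
  have h : HasFDerivAt (fun x : Fin 4 → ℝ => c 0 * x 0 + c 1 * x 1 + c 2 * x 2 + c 3 * x 3)
      (c 0 • pr 0 + c 1 • pr 1 + c 2 • pr 2 + c 3 • pr 3) x :=
    ((((pr 0).hasFDerivAt (x := x)).const_mul (c 0)).add
      (((pr 1).hasFDerivAt (x := x)).const_mul (c 1))).add
      (((pr 2).hasFDerivAt (x := x)).const_mul (c 2)) |>.add
      (((pr 3).hasFDerivAt (x := x)).const_mul (c 3))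
  rw [pd, h.fderiv]
  fin_cases i <;> simp [pr, Pi.single_apply]

lemma pd_Sgen (ε : ℤ) (s t : ℝ) (x : Fin 4 → ℝ) (i : Fin 4) :
    pd i (Sgen ε s t) x
      = (if ε = 1 then ![0, gfun' s, gfun s t, 0] else ![gfun' s, 0, 0, gfun s t]) i := by
  by_cases h : ε = 1
  · have hS : Sgen ε s t = fun x =>
        (![0, gfun' s, gfun s t, 0] : Fin 4 → ℝ) 0 * x 0
        + (![0, gfun' s, gfun s t, 0] : Fin 4 → ℝ) 1 * x 1
        + (![0, gfun' s, gfun s t, 0] : Fin 4 → ℝ) 2 * x 2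
        + (![0, gfun' s, gfun s t, 0] : Fin 4 → ℝ) 3 * x 3 := by
      funext y; simp [Sgen, h]; ring
    rw [hS, pd_linear, if_pos h]
  · have hS : Sgen ε s t = fun x =>
        (![gfun' s, 0, 0, gfun s t] : Fin 4 → ℝ) 0 * x 0
        + (![gfun' s, 0, 0, gfun s t] : Fin 4 → ℝ) 1 * x 1
        + (![gfun' s, 0, 0, gfun s t] : Fin 4 → ℝ) 2 * x 2
        + (![gfun' s, 0, 0, gfun s t] : Fin 4 → ℝ) 3 * x 3 := by
      funext y; simp [Sgen, h]; ring
    rw [hS, pd_linear, if_neg h]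

/-- {S^ε_s, S^{ε'}_{s'}} = 2 s δ_{ε+ε',0} δ_{s+s',0}, a two-dimensional
Heisenberg algebra h₂ with central extension. -/
theorem heisenberg_charge_algebra :
    ∀ ε ε' : ℤ, ε ∈ ({-1, 1} : Set ℤ) → ε' ∈ ({-1, 1} : Set ℤ) →
    ∀ s s' : ℝ, s ∈ ({-1 / 2, 1 / 2} : Set ℝ) → s' ∈ ({-1 / 2, 1 / 2} : Set ℝ) →
    ∀ (t : ℝ) (x : Fin 4 → ℝ),
      pb (Sgen ε s t) (Sgen ε' s' t) x
        = 2 * s * (if ε + ε' = 0 then (1 : ℝ) else 0) * (if s + s' = 0 then (1 : ℝ) else 0) := by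
  intro ε ε' hε hε' s s' hs hs' t x
  simp only [Set.mem_insert_iff, Set.mem_singleton_iff] at hε hε' hs hs'
  unfold pb
  rcases hε with rfl | rfl <;> rcases hε' with rfl | rfl <;>
    rcases hs with rfl | rfl <;> rcases hs' with rfl | rfl <;>
    simp [pd_Sgen, gfun, gfun'] <;> norm_num
end

section
/- On the phase space R^6 with coordinates (u, v, w, p_u, p_v, p_w) and canonical Poisson bracket, the functions C = u p_u + v p_v + w p_w, V = u² - v² - w², and H = p_u² - p_v² - p_w² satisfy {V, H} = 4C, {C, H} = 2H, and {V, C} = 2V, hence span an sl(2,R) algebra. -/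
/-- Partial derivative of a phase-space function on ℝ⁶ in the `i`-th coordinate. -/
noncomputable def pd6 (i : Fin 6) (F : (Fin 6 → ℝ) → ℝ) (x : Fin 6 → ℝ) : ℝ :=
  fderiv ℝ F x (Pi.single i 1)

/-- Canonical Poisson bracket on ℝ⁶ with coordinates
(u, v, w, p_u, p_v, p_w) = (x 0, x 1, x 2, x 3, x 4, x 5). -/
noncomputable def pb6 (F G : (Fin 6 → ℝ) → ℝ) (x : Fin 6 → ℝ) : ℝ :=
  pd6 0 F x * pd6 3 G x + pd6 1 F x * pd6 4 G x + pd6 2 F x * pd6 5 G x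
    - pd6 3 F x * pd6 0 G x - pd6 4 F x * pd6 1 G x - pd6 5 F x * pd6 2 G x

/-- The dilatation generator C = u p_u + v p_v + w p_w. -/
noncomputable def Cgen : (Fin 6 → ℝ) → ℝ := fun x => x 0 * x 3 + x 1 * x 4 + x 2 * x 5
/-- V = u² - v² - w². -/
noncomputable def Vgen : (Fin 6 → ℝ) → ℝ := fun x => x 0 ^ 2 - x 1 ^ 2 - x 2 ^ 2
/-- The Bianchi I Hamiltonian H = p_u² - p_v² - p_w². -/
noncomputable def Hgen : (Fin 6 → ℝ) → ℝ := fun x => x 3 ^ 2 - x 4 ^ 2 - x 5 ^ 2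

theorem hasFDerivAt_coord {ι : Type*} [Fintype ι] (j : ι) (x : ι → ℝ) :
    HasFDerivAt (fun y : ι → ℝ => y j) (ContinuousLinearMap.proj (R := ℝ) j) x :=
  hasFDerivAt_apply j x

theorem pd6_eq_of_hasFDerivAt {F : (Fin 6 → ℝ) → ℝ} {F' : (Fin 6 → ℝ) →L[ℝ] ℝ}
    {x : Fin 6 → ℝ} (hF : HasFDerivAt F F' x) (i : Fin 6) :
    pd6 i F x = F' (Pi.single i 1) := by
  rw [pd6, hF.fderiv]

theorem pd6_Cgen (i : Fin 6) (x : Fin 6 → ℝ) :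
    pd6 i Cgen x = ![x 3, x 4, x 5, x 0, x 1, x 2] i := by
  have hC : HasFDerivAt Cgen _ x :=
    (((hasFDerivAt_coord 0 x).mul (hasFDerivAt_coord 3 x)).add
      ((hasFDerivAt_coord 1 x).mul (hasFDerivAt_coord 4 x))).add
      ((hasFDerivAt_coord 2 x).mul (hasFDerivAt_coord 5 x))
  rw [pd6_eq_of_hasFDerivAt hC]
  fin_cases i <;> simp

theorem pd6_Vgen (i : Fin 6) (x : Fin 6 → ℝ) :
    pd6 i Vgen x = ![2 * x 0, -(2 * x 1), -(2 * x 2), 0, 0, 0] i := by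
  have hV : HasFDerivAt Vgen _ x :=
    (((hasFDerivAt_coord 0 x).pow 2).sub ((hasFDerivAt_coord 1 x).pow 2)).sub
      ((hasFDerivAt_coord 2 x).pow 2)
  rw [pd6_eq_of_hasFDerivAt hV]
  fin_cases i <;> simp

theorem pd6_Hgen (i : Fin 6) (x : Fin 6 → ℝ) :
    pd6 i Hgen x = ![0, 0, 0, 2 * x 3, -(2 * x 4), -(2 * x 5)] i := by
  have hH : HasFDerivAt Hgen _ x :=
    (((hasFDerivAt_coord 3 x).pow 2).sub ((hasFDerivAt_coord 4 x).pow 2)).sub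
      ((hasFDerivAt_coord 5 x).pow 2)
  rw [pd6_eq_of_hasFDerivAt hH]
  fin_cases i <;> simp

/-- the CVH algebra of the Bianchi I model:
{V, H} = 4C, {C, H} = 2H, {V, C} = 2V, hence (C, V, H) span an sl(2,ℝ) algebra. -/
theorem bianchiI_cvh_algebra :
    ∀ x : Fin 6 → ℝ,
      pb6 Vgen Hgen x = 4 * Cgen x ∧ pb6 Cgen Hgen x = 2 * Hgen x ∧
        pb6 Vgen Cgen x = 2 * Vgen x := by
  intro x
  simp only [pb6, pd6_Cgen, pd6_Vgen, pd6_Hgen, Cgen, Vgen, Hgen]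
  refine ⟨?_, ?_, ?_⟩ <;> simp <;> ring
end
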